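/- For every nonnegative integer M and every complex number q with 0<|q|<1: Σ_{n=0}^{M} q^{3n²} (−q;q²)_{3n} / ( (q⁶;q⁶)_{M−n} (q⁶;q⁶)_{2n} ) = ( (−q³;q⁶)_M / (q⁶;q⁶)_{2M} ) · Σ_{j=−M}^{M} q^{6j²+2j} [2M choose M+j]_{q⁶}. -/

import Mathlib

open Finset

noncomputable section

/-- The finite q-Pochhammer symbol `(a;q)_n`. -/
def qPoch (a q : ℂ) (n : ℕ) : ℂ := ∏ k ∈ Finset.range n, (1 - a * q ^ k)

/-- The infinite q-Pochhammer symbol `(a;q)_∞`. -/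
def qPochInf (a q : ℂ) : ℂ := ∏' k : ℕ, (1 - a * q ^ k)

/-- The Gaussian binomial coefficient `[N choose k]_q`, zero unless `0 ≤ k ≤ N`. -/
def qBinom (q : ℂ) (N k : ℤ) : ℂ :=
  if 0 ≤ k ∧ k ≤ N then qPoch q q N.toNat / (qPoch q q k.toNat * qPoch q q (N - k).toNat)
  else 0

/-- `1/(a;q)_k`, with the convention that it is `0` for `k < 0`. -/
def invPoch (a q : ℂ) (k : ℤ) : ℂ := if 0 ≤ k then (qPoch a q k.toNat)⁻¹ else 0

/-- Warnaar's refined q-trinomial coefficient `T(L, M; a, b; q)`, where `z` is a fixed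
square root of `q`, so that `q^(n²/2) = z^(n²)`. -/
def Twar (z q : ℂ) (L M a b : ℤ) : ℂ :=
  ∑' n : ℕ, if (L - a - (n : ℤ)) % 2 = 0 then
    z ^ (n ^ 2) * qBinom q M (n : ℤ) * qBinom q (M + b + (L - a - (n : ℤ)) / 2) (M + b) *
      qBinom q (M - b + (L + a - (n : ℤ)) / 2) (M - b)
  else 0

/-- Warnaar's refined q-trinomial coefficient `S(L, M; a, b; q)`. -/
def Swar (q : ℂ) (L M a b : ℤ) : ℂ :=
  ∑' n : ℕ, q ^ ((n : ℤ) * ((n : ℤ) + a)) * qBinom q (M + L - a - 2 * (n : ℤ)) M *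
    qBinom q (M - a + b) (n : ℤ) * qBinom q (M + a - b) ((n : ℤ) + a)

/-- The Andrews–Baxter q-trinomial coefficient `(L, b; a; q)₂`. -/
def roundTri (q : ℂ) (L : ℕ) (b a : ℤ) : ℂ :=
  ∑' n : ℕ, q ^ ((n : ℤ) * ((n : ℤ) + b)) * qPoch q q L * invPoch q q (n : ℤ) *
    invPoch q q ((n : ℤ) + a) * invPoch q q ((L : ℤ) - 2 * (n : ℤ) - a)

/-- The Andrews–Baxter q-trinomial `T₀(L; a; q) = q^((L²-a²)/2) (L,a;a;1/q)₂`, where `z`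
is a fixed square root of `q`, so that `q^((L²-a²)/2) = z^(L²-a²)`. -/
def T0 (z q : ℂ) (L : ℕ) (a : ℤ) : ℂ := z ^ ((L : ℤ) ^ 2 - a ^ 2) * roundTri q⁻¹ L a a

/-- The partial sum `N_k = n_k + n_(k+1) + ... + n_ν` (0-indexed). -/
def Nsum {ν : ℕ} (n : Fin ν → ℕ) (k : Fin ν) : ℕ := ∑ l : Fin ν, if k ≤ l then n l else 0

end

/-!
Write `Q = q⁶`. Since `(-q;q²)_{3n} = (-q;Q)_n (-q³;Q)_n (-q⁵;Q)_n`, the finite Jacobi triple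
product (a consequence of Cauchy's q-binomial theorem) expands `(-q;Q)_n (-q⁵;Q)_n / (Q;Q)_{2n}`
as `∑_{|j| ≤ n} q^(3j²+2j) / ((Q;Q)_{n-|j|} (Q;Q)_{n+|j|})`. After exchanging the two sums, the
sum over `n` for fixed `j` is a terminating q-Chu–Vandermonde sum with `a = c = -q^(6|j|+3)`; it
equals `q^(3j²) (-q³;Q)_M / ((Q;Q)_{M-|j|} (Q;Q)_{M+|j|})`, which is the `j`-th term on the right.
The q-Chu–Vandermonde sum itself is proved by induction on its length with a WZ certificate.
-/

lemma choose_two_succ (d : ℕ) : (d + 1).choose 2 = d.choose 2 + d := by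
  rw [Nat.choose_succ_succ', Nat.choose_one_right, add_comm]

lemma two_mul_choose_two_add_self (k : ℕ) : 2 * k.choose 2 + k = k ^ 2 := by
  induction k with
  | zero => simp
  | succ k ih =>
    rw [choose_two_succ]
    linarith

lemma prod_range_pow_two_mul_add_one (p : ℂ) (n : ℕ) :
    ∏ k ∈ range n, p ^ (2 * k + 1) = p ^ (n ^ 2) := by
  induction n with
  | zero => simp
  | succ n ih =>
    rw [prod_range_succ, ih, ← pow_add]
    ring_nf

lemma sum_Icc_neg_eq_sum_range {M : Type*} [AddCommMonoid M] (n : ℕ) (f : ℤ → M) :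
    ∑ j ∈ Icc (-(n : ℤ)) n, f j = ∑ k ∈ range (2 * n + 1), f (k - n) := by
  refine sum_nbij' (fun j ↦ (j + n).toNat) (fun k ↦ (k : ℤ) - n) ?_ ?_ ?_ ?_ ?_ <;>
    intro j hj <;> simp only [mem_Icc, mem_range] at hj ⊢
  all_goals first | omega | (congr 1; omega)

@[simp]
lemma qPoch_zero (a q : ℂ) : qPoch a q 0 = 1 := prod_range_zero _

lemma qPoch_succ (a q : ℂ) (n : ℕ) : qPoch a q (n + 1) = qPoch a q n * (1 - a * q ^ n) :=
  prod_range_succ _ _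

lemma qPoch_add (a q : ℂ) (m n : ℕ) :
    qPoch a q (m + n) = qPoch a q m * qPoch (a * q ^ m) q n := by
  simp only [qPoch, prod_range_add, mul_assoc, pow_add]

lemma qPoch_three_mul (a q : ℂ) (n : ℕ) :
    qPoch a q (3 * n) =
      qPoch a (q ^ 3) n * qPoch (a * q) (q ^ 3) n * qPoch (a * q ^ 2) (q ^ 3) n := by
  induction n with
  | zero => simp
  | succ n ih =>
    rw [show 3 * (n + 1) = 3 * n + 1 + 1 + 1 by ring, qPoch_succ, qPoch_succ, qPoch_succ, ih,
      qPoch_succ, qPoch_succ, qPoch_succ]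
    ring

lemma qPoch_ne_zero {a q : ℂ} (ha : ‖a‖ < 1) (hq : ‖q‖ ≤ 1) (n : ℕ) : qPoch a q n ≠ 0 := by
  refine prod_ne_zero_iff.2 fun k _ ↦ sub_ne_zero.2 fun h ↦ ?_
  have : ‖a * q ^ k‖ < 1 := by
    rw [norm_mul, norm_pow]
    exact mul_lt_one_of_nonneg_of_lt_one_left (norm_nonneg _) ha (pow_le_one₀ (norm_nonneg _) hq)
  rw [← h, norm_one] at this
  exact this.false

lemma one_sub_mul_pow_ne_zero {Q : ℂ} (hQ : ∀ k, qPoch Q Q k ≠ 0) (k : ℕ) : 1 - Q * Q ^ k ≠ 0 :=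
  right_ne_zero_of_mul (qPoch_succ Q Q k ▸ hQ (k + 1))

lemma qBinom_natCast {Q : ℂ} {N k : ℕ} (hk : k ≤ N) :
    qBinom Q N k = qPoch Q Q N / (qPoch Q Q k * qPoch Q Q (N - k)) := by
  rw [qBinom, if_pos (by omega)]
  congr 3
  omega

lemma qBinom_of_lt {Q : ℂ} {N k : ℤ} (hk : N < k) : qBinom Q N k = 0 := by
  rw [qBinom, if_neg (by omega)]

lemma qBinom_zero_right {Q : ℂ} (hQ : ∀ k, qPoch Q Q k ≠ 0) (N : ℕ) : qBinom Q N 0 = 1 := by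
  simpa [hQ] using qBinom_natCast (Q := Q) (Nat.zero_le N)

lemma qBinom_succ_succ {Q : ℂ} (hQ : ∀ k, qPoch Q Q k ≠ 0) {N k : ℕ} (hk : k ≤ N) :
    qBinom Q ((N + 1 : ℕ) : ℤ) ((k + 1 : ℕ) : ℤ) =
      qBinom Q N (k + 1 : ℕ) + Q ^ (N - k) * qBinom Q N k := by
  obtain ⟨e, rfl⟩ := Nat.exists_eq_add_of_le hk
  rw [qBinom_natCast (by omega), qBinom_natCast hk, Nat.add_sub_cancel_left]
  rcases e with _ | e
  · rw [qBinom_of_lt (by omega)]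
    have := hQ k
    have := hQ (k + 1)
    simp [div_self, *]
  · rw [qBinom_natCast (by omega), show k + (e + 1) + 1 - (k + 1) = e + 1 by omega,
      show k + (e + 1) - (k + 1) = e by omega, show k + (e + 1) + 1 = k + e + 1 + 1 by omega,
      qPoch_succ, qPoch_succ Q Q k, qPoch_succ Q Q e]
    have := hQ k
    have := hQ e
    have := hQ (k + e + 1)
    have := one_sub_mul_pow_ne_zero hQ k
    have := one_sub_mul_pow_ne_zero hQ e
    field_simp
    rw [← add_assoc]
    ring

lemma qBinom_two_mul_div {Q : ℂ} (hQ : ∀ k, qPoch Q Q k ≠ 0) {n : ℕ} {j : ℤ}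
    (hj : j ∈ Icc (-(n : ℤ)) n) :
    qBinom Q (2 * n) (n + j) / qPoch Q Q (2 * n) =
      (qPoch Q Q (n - j.natAbs) * qPoch Q Q (n + j.natAbs))⁻¹ := by
  rw [mem_Icc] at hj
  have := hQ (2 * n)
  have := hQ (n - j.natAbs)
  have := hQ (n + j.natAbs)
  rw [qBinom, if_pos (by omega), show (2 * (n : ℤ)).toNat = 2 * n by omega]
  rcases le_total 0 j with hj0 | hj0
  · rw [show ((n : ℤ) + j).toNat = n + j.natAbs by omega,
      show (2 * (n : ℤ) - (n + j)).toNat = n - j.natAbs by omega]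
    field_simp
  · rw [show ((n : ℤ) + j).toNat = n - j.natAbs by omega,
      show (2 * (n : ℤ) - (n + j)).toNat = n + j.natAbs by omega]
    field_simp

/-- Cauchy's q-binomial theorem, in homogeneous form. -/
theorem prod_add_mul_pow_eq_sum_qBinom {Q : ℂ} (hQ : ∀ k, qPoch Q Q k ≠ 0) (y z : ℂ) (N : ℕ) :
    ∏ k ∈ range N, (y + z * Q ^ k) =
      ∑ k ∈ range (N + 1), Q ^ k.choose 2 * z ^ k * y ^ (N - k) * qBinom Q N k := by
  induction N with
  | zero => simpa using (qBinom_zero_right hQ 0).symm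
  | succ N ih =>
    set T : ℕ → ℕ → ℂ := fun N k ↦ Q ^ k.choose 2 * z ^ k * y ^ (N - k) * qBinom Q N k with hT
    have pascal : ∀ k ∈ range (N + 1),
        T (N + 1) (k + 1) = y * T N (k + 1) + z * Q ^ N * T N k := by
      intro k hk
      obtain ⟨e, rfl⟩ := Nat.exists_eq_add_of_le (Nat.lt_succ_iff.1 (mem_range.1 hk))
      simp only [hT]
      rw [qBinom_succ_succ hQ le_self_add, choose_two_succ]
      rcases e with _ | e
      · rw [qBinom_of_lt (by omega)]
        simp only [add_zero, Nat.sub_self, pow_add]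
        ring
      · simp only [show k + (e + 1) + 1 - (k + 1) = e + 1 by omega,
          show k + (e + 1) - (k + 1) = e by omega, show k + (e + 1) - k = e + 1 by omega]
        ring
    have first : T (N + 1) 0 = y * T N 0 := by
      simp only [hT, Nat.cast_zero, qBinom_zero_right hQ, Nat.sub_zero, pow_succ']
      ring
    have last : T N (N + 1) = 0 := by
      simp only [hT, qBinom_of_lt (by omega : (N : ℤ) < (N + 1 : ℕ)), mul_zero]
    rw [prod_range_succ, ih]
    change (∑ k ∈ range (N + 1), T N k) * _ = ∑ k ∈ range (N + 1 + 1), T (N + 1) k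
    rw [sum_range_succ' _ (N + 1), sum_congr rfl pascal, sum_add_distrib, ← mul_sum, ← mul_sum,
      first, sum_range_succ (fun k ↦ T N (k + 1)), last, sum_range_succ' (T N)]
    ring

lemma qBinomial_coeff_eq_mul_zpow {p x : ℂ} (hp : p ≠ 0) (hx : x ≠ 0) {n k : ℕ}
    (hk : k ≤ 2 * n) :
    (p ^ 2) ^ k.choose 2 * (x * p) ^ k * ((p ^ 2) ^ n) ^ (2 * n - k) =
      x ^ n * p ^ (3 * n ^ 2) * (x ^ ((k : ℤ) - n) * p ^ (((k : ℤ) - n) ^ 2)) := by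
  have hx' : x ^ n * x ^ ((k : ℤ) - n) = x ^ k := by
    rw [← zpow_natCast, ← zpow_add₀ hx, add_sub_cancel, zpow_natCast]
  have hp' : p ^ (3 * n ^ 2) * p ^ (((k : ℤ) - n) ^ 2) =
      p ^ (2 * k.choose 2 + k + 2 * n * (2 * n - k)) := by
    rw [← zpow_natCast, ← zpow_add₀ hp, ← zpow_natCast, two_mul_choose_two_add_self]
    congr 1
    push_cast [Nat.cast_sub hk]
    ring
  rw [mul_mul_mul_comm (x ^ n), hx', hp']
  ring

lemma prod_range_sq_pow_add_eq_qPoch_div {p x : ℂ} (hx : x ≠ 0) (n : ℕ) :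
    ∏ k ∈ range n, ((p ^ 2) ^ n + x * p * (p ^ 2) ^ k) =
      x ^ n * p ^ (n ^ 2) * qPoch (-(p / x)) (p ^ 2) n := by
  have factor : ∀ k ∈ range n, (p ^ 2) ^ n + x * p * (p ^ 2) ^ k =
      p ^ (2 * k + 1) * (x + p * (p ^ 2) ^ (n - 1 - k)) := by
    intro k hk
    obtain ⟨m, rfl⟩ : ∃ m, n = m + k + 1 := ⟨n - 1 - k, by have := mem_range.1 hk; omega⟩
    rw [show m + k + 1 - 1 - k = m by omega]
    ring
  have unfactor : ∀ k ∈ range n, x + p * (p ^ 2) ^ k = x * (1 - -(p / x) * (p ^ 2) ^ k) := by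
    intro k _
    field_simp
    ring
  rw [prod_congr rfl factor, prod_mul_distrib, prod_range_pow_two_mul_add_one,
    prod_range_reflect (fun k ↦ x + p * (p ^ 2) ^ k), prod_congr rfl unfactor, prod_mul_distrib,
    prod_const, card_range, qPoch]
  ring

/-- A finite form of Jacobi's triple product identity: the q-binomial theorem applied to
`∏_{k<2n} (p^(2n) + x p^(2k+1))`, whose lower half is read backwards. -/
theorem qPoch_mul_qPoch_eq_sum_qBinom {p x : ℂ} (hp : p ≠ 0) (hx : x ≠ 0)
    (hQ : ∀ k, qPoch (p ^ 2) (p ^ 2) k ≠ 0) (n : ℕ) :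
    qPoch (-(x * p)) (p ^ 2) n * qPoch (-(p / x)) (p ^ 2) n =
      ∑ j ∈ Icc (-(n : ℤ)) n, x ^ j * p ^ (j ^ 2) * qBinom (p ^ 2) (2 * n) (n + j) := by
  have upper : ∏ k ∈ range n, ((p ^ 2) ^ n + x * p * (p ^ 2) ^ (n + k)) =
      ((p ^ 2) ^ n) ^ n * qPoch (-(x * p)) (p ^ 2) n := by
    have distrib := pow_card_mul_prod (s := range n) (b := (p ^ 2) ^ n)
      (f := fun k ↦ 1 - -(x * p) * (p ^ 2) ^ k)
    rw [card_range] at distrib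
    rw [qPoch, distrib]
    exact prod_congr rfl fun k _ ↦ by ring
  have hscale : x ^ n * p ^ (3 * n ^ 2) ≠ 0 := by positivity
  apply mul_left_cancel₀ hscale
  rw [sum_Icc_neg_eq_sum_range, mul_sum]
  calc x ^ n * p ^ (3 * n ^ 2) * (qPoch (-(x * p)) (p ^ 2) n * qPoch (-(p / x)) (p ^ 2) n)
      = ∏ k ∈ range (2 * n), ((p ^ 2) ^ n + x * p * (p ^ 2) ^ k) := by
        rw [two_mul, prod_range_add, prod_range_sq_pow_add_eq_qPoch_div hx, upper]
        ring
    _ = ∑ k ∈ range (2 * n + 1), (p ^ 2) ^ k.choose 2 * (x * p) ^ k *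
          ((p ^ 2) ^ n) ^ (2 * n - k) * qBinom (p ^ 2) (2 * n : ℕ) k :=
        prod_add_mul_pow_eq_sum_qBinom hQ _ _ _
    _ = _ := by
      refine sum_congr rfl fun k hk ↦ ?_
      rw [qBinomial_coeff_eq_mul_zpow hp hx (by have := mem_range.1 hk; omega), add_sub_cancel]
      push_cast
      ring

/-- With `C = Q^(b+1)`, the sum of these terms over `d ≤ m` is the basic hypergeometric series
`₂φ₁(Q^(-m), a; C; Q, C Q^m / a)` divided by `(Q;Q)_m (Q;Q)_b`. -/
noncomputable def chuVandermondeTerm (Q a c : ℂ) (b m d : ℕ) : ℂ :=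
  Q ^ d.choose 2 * (-c) ^ d * qPoch a Q d /
    (qPoch Q Q (m - d) * qPoch Q Q d * qPoch Q Q (b + d))

/-- The WZ certificate of the q-Chu–Vandermonde sum. -/
noncomputable def chuVandermondeCert (Q a c : ℂ) (b m d : ℕ) : ℂ :=
  -Q ^ (m + 1 - d) * (1 - Q ^ d) * (1 - Q ^ (b + d)) * chuVandermondeTerm Q a c b (m + 1) d

section ChuVandermonde

variable {Q a c : ℂ} {b : ℕ}

lemma chuVandermondeTerm_add_left (hQ : ∀ k, qPoch Q Q k ≠ 0) (d r : ℕ) :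
    chuVandermondeTerm Q a c b (d + r) d =
      (1 - Q * Q ^ r) * chuVandermondeTerm Q a c b (d + r + 1) d := by
  have := hQ r
  have := one_sub_mul_pow_ne_zero hQ r
  simp only [chuVandermondeTerm, show d + r - d = r by omega, show d + r + 1 - d = r + 1 by omega,
    qPoch_succ Q Q r]
  field_simp

lemma chuVandermondeTerm_succ_right (hQ : ∀ k, qPoch Q Q k ≠ 0) (d r : ℕ) :
    (1 - Q * Q ^ d) * (1 - Q * Q ^ (b + d)) * chuVandermondeTerm Q a c b (d + r + 1) (d + 1) =
      -c * Q ^ d * (1 - a * Q ^ d) * (1 - Q * Q ^ r) *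
        chuVandermondeTerm Q a c b (d + r + 1) d := by
  have := hQ r
  have := hQ d
  have := hQ (b + d)
  have := one_sub_mul_pow_ne_zero hQ r
  have := one_sub_mul_pow_ne_zero hQ d
  have := one_sub_mul_pow_ne_zero hQ (b + d)
  simp only [chuVandermondeTerm, show d + r + 1 - (d + 1) = r by omega,
    show d + r + 1 - d = r + 1 by omega, ← add_assoc, qPoch_succ, choose_two_succ, pow_succ (-c)]
  rw [pow_add Q (d.choose 2)]
  field_simp

lemma chuVandermondeTerm_wz (hQ : ∀ k, qPoch Q Q k ≠ 0) (hac : a * c = Q ^ (b + 1)) {m d : ℕ}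
    (hd : d ≤ m) :
    (1 - Q * Q ^ m) * (1 - Q * Q ^ (b + m)) * chuVandermondeTerm Q a c b (m + 1) d =
      (1 - c * Q ^ m) * chuVandermondeTerm Q a c b m d +
        (chuVandermondeCert Q a c b m (d + 1) - chuVandermondeCert Q a c b m d) := by
  obtain ⟨r, rfl⟩ := Nat.exists_eq_add_of_le hd
  have h1 := chuVandermondeTerm_add_left (a := a) (c := c) (b := b) hQ d r
  have h2 := chuVandermondeTerm_succ_right (a := a) (c := c) (b := b) hQ d r
  simp only [chuVandermondeCert, show d + r + 1 - d = r + 1 by omega,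
    show d + r + 1 - (d + 1) = r by omega]
  linear_combination (-(1 - c * Q ^ (d + r))) * h1 + Q ^ r * h2 +
    Q ^ d * Q ^ d * Q ^ r * (1 - Q * Q ^ r) * chuVandermondeTerm Q a c b (d + r + 1) d * hac

lemma chuVandermondeCert_zero (m : ℕ) : chuVandermondeCert Q a c b m 0 = 0 := by
  simp [chuVandermondeCert]

lemma chuVandermondeCert_self (m : ℕ) :
    chuVandermondeCert Q a c b m (m + 1) =
      -((1 - Q * Q ^ m) * (1 - Q * Q ^ (b + m)) * chuVandermondeTerm Q a c b (m + 1) (m + 1)) := by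
  simp only [chuVandermondeCert, Nat.sub_self, pow_zero, pow_succ', ← add_assoc]
  ring

theorem q_chu_vandermonde (hQ : ∀ k, qPoch Q Q k ≠ 0) (hac : a * c = Q ^ (b + 1)) (m : ℕ) :
    ∑ d ∈ range (m + 1), chuVandermondeTerm Q a c b m d =
      qPoch c Q m / (qPoch Q Q m * qPoch Q Q (b + m)) := by
  induction m with
  | zero => simp [chuVandermondeTerm]
  | succ m ih =>
    have h1 := hQ m
    have h2 := hQ (b + m)
    have h3 := one_sub_mul_pow_ne_zero hQ m
    have h4 := one_sub_mul_pow_ne_zero hQ (b + m)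
    apply mul_left_cancel₀ (mul_ne_zero h3 h4)
    rw [sum_range_succ, mul_add, mul_sum,
      sum_congr rfl fun d hd ↦ chuVandermondeTerm_wz hQ hac (Nat.lt_succ_iff.1 (mem_range.1 hd)),
      sum_add_distrib, ← mul_sum, ih, sum_range_sub, chuVandermondeCert_zero,
      chuVandermondeCert_self, sub_zero, neg_add_cancel_right, ← add_assoc, qPoch_succ,
      qPoch_succ, qPoch_succ, mul_div_assoc', mul_div_assoc',
      div_eq_div_iff (by simp [*]) (by simp [*])]
    ring

end ChuVandermonde

/-- The case `a = c = -q^(6J+3)`, `b = 2J` of the q-Chu–Vandermonde sum in base `q⁶`. -/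
lemma sum_Icc_pow_mul_qPoch_div {q : ℂ} (hQ : ∀ k, qPoch (q ^ 6) (q ^ 6) k ≠ 0) {J M : ℕ}
    (hJM : J ≤ M) :
    ∑ n ∈ Icc J M, q ^ (3 * n ^ 2) * qPoch (-q ^ 3) (q ^ 6) n /
        (qPoch (q ^ 6) (q ^ 6) (M - n) * qPoch (q ^ 6) (q ^ 6) (n - J) *
          qPoch (q ^ 6) (q ^ 6) (n + J)) =
      q ^ (3 * J ^ 2) * qPoch (-q ^ 3) (q ^ 6) M /
        (qPoch (q ^ 6) (q ^ 6) (M - J) * qPoch (q ^ 6) (q ^ 6) (M + J)) := by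
  obtain ⟨m, rfl⟩ := Nat.exists_eq_add_of_le hJM
  set a := -q ^ 3 * (q ^ 6) ^ J with ha
  have haa : a * a = (q ^ 6) ^ (2 * J + 1) := by rw [ha]; ring
  have term : ∀ d ∈ range (m + 1),
      q ^ (3 * (J + d) ^ 2) * qPoch (-q ^ 3) (q ^ 6) (J + d) /
          (qPoch (q ^ 6) (q ^ 6) (J + m - (J + d)) * qPoch (q ^ 6) (q ^ 6) (J + d - J) *
            qPoch (q ^ 6) (q ^ 6) (J + d + J)) =
        q ^ (3 * J ^ 2) * qPoch (-q ^ 3) (q ^ 6) J *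
          chuVandermondeTerm (q ^ 6) a a (2 * J) m d := by
    intro d _
    have hexp : q ^ (3 * (J + d) ^ 2) = q ^ (3 * J ^ 2) * (q ^ 6) ^ d.choose 2 * (-a) ^ d := by
      have := two_mul_choose_two_add_self d
      rw [ha, neg_mul, neg_neg, mul_pow, ← pow_mul, ← pow_mul, ← pow_mul, ← pow_mul, ← pow_add,
        ← pow_add, ← pow_add]
      congr 1
      nlinarith
    rw [chuVandermondeTerm, hexp, qPoch_add, show J + m - (J + d) = m - d by omega,
      Nat.add_sub_cancel_left, show J + d + J = 2 * J + d by omega]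
    ring
  rw [← Finset.Ico_add_one_right_eq_Icc, sum_Ico_eq_sum_range, show J + m + 1 - J = m + 1 by omega,
    sum_congr rfl term, ← mul_sum, q_chu_vandermonde hQ haa, qPoch_add (-q ^ 3) _ J m,
    Nat.add_sub_cancel_left, show J + m + J = 2 * J + m by omega]
  ring

lemma qPoch_neg_sq_three_mul_div {q : ℂ} (hq : q ≠ 0) (hQ : ∀ k, qPoch (q ^ 6) (q ^ 6) k ≠ 0)
    (n : ℕ) :
    qPoch (-q) (q ^ 2) (3 * n) / qPoch (q ^ 6) (q ^ 6) (2 * n) =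
      qPoch (-q ^ 3) (q ^ 6) n * ∑ j ∈ Icc (-(n : ℤ)) n, q ^ (3 * j ^ 2 + 2 * j) *
        (qPoch (q ^ 6) (q ^ 6) (n - j.natAbs) * qPoch (q ^ 6) (q ^ 6) (n + j.natAbs))⁻¹ := by
  have sq_cube : (q ^ 3) ^ 2 = q ^ 6 := by ring
  have jacobi := qPoch_mul_qPoch_eq_sum_qBinom (p := q ^ 3) (x := q ^ 2) (pow_ne_zero _ hq)
    (pow_ne_zero _ hq) (sq_cube ▸ hQ) n
  rw [sq_cube, show q ^ 2 * q ^ 3 = q ^ 5 by ring, show q ^ 3 / q ^ 2 = q by field_simp] at jacobi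
  rw [qPoch_three_mul, show (q ^ 2) ^ 3 = q ^ 6 by ring, show -q * q ^ 2 = -q ^ 3 by ring,
    show -q * (q ^ 2) ^ 2 = -q ^ 5 by ring]
  calc _ = qPoch (-q ^ 3) (q ^ 6) n *
        (qPoch (-q ^ 5) (q ^ 6) n * qPoch (-q) (q ^ 6) n / qPoch (q ^ 6) (q ^ 6) (2 * n)) := by
        ring
    _ = _ := by
      rw [jacobi, sum_div]
      congr 1
      refine sum_congr rfl fun j hj ↦ ?_
      rw [mul_div_assoc, qBinom_two_mul_div hQ hj, ← zpow_natCast q 2, ← zpow_natCast q 3,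
        ← zpow_mul, ← zpow_mul, ← zpow_add₀ hq]
      congr 2
      push_cast
      ring

lemma pow_mul_qPoch_div_eq_sum_Icc {q : ℂ} (hq : q ≠ 0) (hQ : ∀ k, qPoch (q ^ 6) (q ^ 6) k ≠ 0)
    (M n : ℕ) :
    q ^ (3 * n ^ 2) * qPoch (-q) (q ^ 2) (3 * n) /
        (qPoch (q ^ 6) (q ^ 6) (M - n) * qPoch (q ^ 6) (q ^ 6) (2 * n)) =
      ∑ j ∈ Icc (-(n : ℤ)) n, q ^ (3 * j ^ 2 + 2 * j) *
        (q ^ (3 * n ^ 2) * qPoch (-q ^ 3) (q ^ 6) n /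
          (qPoch (q ^ 6) (q ^ 6) (M - n) * qPoch (q ^ 6) (q ^ 6) (n - j.natAbs) *
            qPoch (q ^ 6) (q ^ 6) (n + j.natAbs))) := by
  rw [← div_mul_div_comm, qPoch_neg_sq_three_mul_div hq hQ n, mul_sum, mul_sum]
  exact sum_congr rfl fun j _ ↦ by ring

lemma sum_Icc_natAbs_eq_mul_qBinom {q : ℂ} (hq : q ≠ 0) (hQ : ∀ k, qPoch (q ^ 6) (q ^ 6) k ≠ 0)
    {M : ℕ} {j : ℤ} (hj : j ∈ Icc (-(M : ℤ)) M) :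
    ∑ n ∈ Icc j.natAbs M, q ^ (3 * j ^ 2 + 2 * j) *
        (q ^ (3 * n ^ 2) * qPoch (-q ^ 3) (q ^ 6) n /
          (qPoch (q ^ 6) (q ^ 6) (M - n) * qPoch (q ^ 6) (q ^ 6) (n - j.natAbs) *
            qPoch (q ^ 6) (q ^ 6) (n + j.natAbs))) =
      qPoch (-q ^ 3) (q ^ 6) M / qPoch (q ^ 6) (q ^ 6) (2 * M) *
        (q ^ (6 * j ^ 2 + 2 * j) * qBinom (q ^ 6) (2 * (M : ℤ)) ((M : ℤ) + j)) := by
  have hjM : j.natAbs ≤ M := by rw [mem_Icc] at hj; omega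
  have hpow : q ^ (3 * j ^ 2 + 2 * j) * q ^ (3 * j.natAbs ^ 2) = q ^ (6 * j ^ 2 + 2 * j) := by
    rw [← zpow_natCast, ← zpow_add₀ hq]
    congr 1
    push_cast [sq_abs]
    ring
  rw [← mul_sum, sum_Icc_pow_mul_qPoch_div hQ hjM, ← hpow]
  calc _ = q ^ (3 * j ^ 2 + 2 * j) * q ^ (3 * j.natAbs ^ 2) * qPoch (-q ^ 3) (q ^ 6) M *
        (qPoch (q ^ 6) (q ^ 6) (M - j.natAbs) * qPoch (q ^ 6) (q ^ 6) (M + j.natAbs))⁻¹ := by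
        ring
    _ = _ := by rw [← qBinom_two_mul_div hQ hj]; ring

theorem statement_9 (M : ℕ) (q : ℂ) (h0 : 0 < ‖q‖) (h1 : ‖q‖ < 1) :
    ∑ n ∈ Finset.range (M + 1),
        q ^ (3 * n ^ 2) * qPoch (-q) (q ^ 2) (3 * n) /
          (qPoch (q ^ 6) (q ^ 6) (M - n) * qPoch (q ^ 6) (q ^ 6) (2 * n))
    = qPoch (-q ^ 3) (q ^ 6) M / qPoch (q ^ 6) (q ^ 6) (2 * M) *
        ∑ j ∈ Finset.Icc (-(M : ℤ)) (M : ℤ),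
          q ^ (6 * j ^ 2 + 2 * j) * qBinom (q ^ 6) (2 * (M : ℤ)) ((M : ℤ) + j) := by
  have hq : q ≠ 0 := norm_pos_iff.1 h0
  have hQ : ∀ k, qPoch (q ^ 6) (q ^ 6) k ≠ 0 := by
    have : ‖q ^ 6‖ < 1 := by rw [norm_pow]; exact pow_lt_one₀ (norm_nonneg _) h1 (by norm_num)
    exact qPoch_ne_zero this this.le
  rw [sum_congr rfl fun n _ ↦ pow_mul_qPoch_div_eq_sum_Icc hq hQ M n,
    sum_comm' (t' := Icc (-(M : ℤ)) M) (s' := fun j ↦ Icc j.natAbs M),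
    sum_congr rfl fun j hj ↦ sum_Icc_natAbs_eq_mul_qBinom hq hQ hj, mul_sum]
  intro n j
  simp only [mem_range, mem_Icc]
  omega
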